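/- arXiv:2605.25405 — 4 statements merged into one kernel-verified Lean document; each statement's English description precedes it below -/
import Mathlib

section
/- Let A be a k × k real generalized permutation matrix (exactly one nonzero entry in each row and each column), with the nonzero entry of row i in column u_i. For i ∈ [k], let nep_A(i) be the number of indices j < i with u_j > u_i, and let sgn_A(i) be the sign of the entry A_{i,u_i}. Then the minors Δ_{{u_1,...,u_i}}(A) are nonnegative for all i = 1,...,k if and only if sgn_A(i) = (-1)^{nep_A(i)} for all i = 1,...,k. -/
open Matrix Finset

/-- The number of pivots northeast of the pivot in row `i`:
indices `j < i` with `u j > u i`. -/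
def nep {k : ℕ} (u : Equiv.Perm (Fin k)) (i : Fin k) : ℕ :=
  (Finset.univ.filter (fun j : Fin k => j < i ∧ u i < u j)).card

/-- The minor of `A` on the first `i+1` rows and the columns `{u 0, ..., u i}`,
columns taken in increasing order. -/
noncomputable def leadingMinor {k : ℕ} (A : Matrix (Fin k) (Fin k) ℝ)
    (u : Equiv.Perm (Fin k)) (i : Fin k) : ℝ :=
  Matrix.det (fun a b : Fin (i.val + 1) =>
    A (Fin.castLE i.isLt a)
      (((Finset.Iic i).image u).orderIsoOfFin
        (by rw [Finset.card_image_of_injective _ u.injective, Fin.card_Iic]) b : Fin k))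

open Equiv Equiv.Perm

lemma mySign_eq_signAux : ∀ {n : ℕ} (f : Perm (Fin n)), Perm.sign f = signAux f
  | 0, f => by
    have : f = 1 := Subsingleton.elim _ _
    simp [this, signAux_one]
  | 1, f => by
    have : f = 1 := Subsingleton.elim _ _
    simp [this, signAux_one]
  | (n+2), f => by
    have hs : Function.Surjective (MonoidHom.mk' (signAux (n := n+2)) signAux_mul) := by
      intro a
      rcases Int.units_eq_one_or a with rfl | rfl
      · exact ⟨1, signAux_one _⟩
      · exact ⟨Equiv.swap 0 1, signAux_swap (x := (0 : Fin (n+2))) (y := 1) (Fin.zero_ne_one)⟩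
    exact (DFunLike.congr_fun (eq_sign_of_surjective_hom hs) f).symm

lemma mySignAux_eq_pow {n : ℕ} (f : Perm (Fin n)) :
    signAux f = (-1) ^ ((finPairsLT n).filter fun x => f x.1 ≤ f x.2).card := by
  unfold signAux
  rw [Finset.prod_ite, Finset.prod_const, Finset.prod_const, one_pow, mul_one]

lemma leadingMinor_eq {k : ℕ} (A : Matrix (Fin k) (Fin k) ℝ) (u : Equiv.Perm (Fin k))
    (hA : ∀ i j, A i j ≠ 0 ↔ j = u i) (i : Fin k) :
    leadingMinor A u i = ∏ j ∈ Iic i, ((-1:ℝ) ^ nep u j * A j (u j)) := by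
  have hcard : ((Iic i).image u).card = i.val + 1 := by
    rw [Finset.card_image_of_injective _ u.injective, Fin.card_Iic]
  set φ := ((Iic i).image u).orderIsoOfFin hcard with hφ
  set e : Fin (i.val + 1) → Fin k := Fin.castLE i.isLt with he
  have he_le : ∀ a : Fin (i.val + 1), e a ≤ i := fun a =>
    Fin.le_def.mpr (by simp only [he, Fin.coe_castLE]; exact Nat.lt_succ_iff.mp a.isLt)
  have he_lt : ∀ a b : Fin (i.val + 1), e a < e b ↔ a < b := by
    intro a b; rw [Fin.lt_def, Fin.lt_def]; simp only [he, Fin.coe_castLE]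
  have hmem : ∀ a : Fin (i.val + 1), u (e a) ∈ (Iic i).image u := fun a =>
    Finset.mem_image_of_mem u (Finset.mem_Iic.mpr (he_le a))
  set g : Fin (i.val + 1) → ((Iic i).image u : Finset (Fin k)) := fun a => ⟨u (e a), hmem a⟩
    with hg
  have hginj : Function.Injective g := by
    intro a b hab
    exact Fin.castLE_injective _ (u.injective (congrArg Subtype.val hab))
  have hgbij : Function.Bijective g :=
    (Fintype.bijective_iff_injective_and_card g).2 ⟨hginj, by rw [Fintype.card_coe, hcard, Fintype.card_fin]⟩
  set σ : Equiv.Perm (Fin (i.val + 1)) := (Equiv.ofBijective g hgbij).trans φ.toEquiv.symm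
    with hσ
  have hφσ : ∀ a, (φ (σ a) : Fin k) = u (e a) := by
    intro a; simp [hσ, hg]
  have hlt : ∀ a b, σ a < σ b ↔ u (e a) < u (e b) := by
    intro a b
    rw [← φ.lt_iff_lt, ← Subtype.coe_lt_coe, hφσ, hφσ]
  -- matrix identity
  have hM : (fun a b : Fin (i.val + 1) => A (e a) (φ b)) =
      Matrix.diagonal (fun a => A (e a) (u (e a))) * σ.permMatrix ℝ := by
    funext a b
    show A (e a) (φ b) = (Matrix.diagonal (fun a => A (e a) (u (e a))) * σ.permMatrix ℝ) a b
    rw [Matrix.diagonal_mul]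
    simp only [Equiv.Perm.permMatrix, PEquiv.toMatrix_apply, Equiv.toPEquiv_apply,
      Option.mem_def, Option.some.injEq]
    by_cases hb : b = σ a
    · subst hb
      rw [if_pos rfl, mul_one, hφσ]
    · rw [if_neg (fun h => hb h.symm), mul_zero]
      by_contra hne0
      exact hb (φ.injective (Subtype.ext (by rw [hφσ]; exact (hA _ _).1 hne0)))
  have hLM : leadingMinor A u i = Matrix.det (fun a b : Fin (i.val + 1) => A (e a) (φ b)) := rfl
  have hdet : leadingMinor A u i =
      (∏ a, A (e a) (u (e a))) * ((Perm.sign σ : ℤ) : ℝ) := by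
    rw [hLM, hM, Matrix.det_mul, Matrix.det_diagonal, Matrix.det_permutation]
  -- sign computation
  have hsign : Perm.sign σ = (-1 : ℤˣ) ^ (∑ j ∈ Iic i, nep u j) := by
    rw [mySign_eq_signAux, mySignAux_eq_pow]
    congr 1
    have hsum : (∑ j ∈ Iic i, nep u j) =
        ((Iic i).sigma fun j => univ.filter fun m => m < j ∧ u j < u m).card := by
      rw [Finset.card_sigma]; rfl
    rw [hsum]
    apply Finset.card_bij (fun x _ => (⟨e x.1, e x.2⟩ : Σ _ : Fin k, Fin k))
    · intro x hx
      simp only [Finset.mem_filter, mem_finPairsLT] at hx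
      obtain ⟨h21, hle⟩ := hx
      have hne : σ x.1 ≠ σ x.2 := fun h => absurd (σ.injective h) (ne_of_gt h21)
      have hlt' : u (e x.1) < u (e x.2) := (hlt _ _).1 (lt_of_le_of_ne hle hne)
      simp only [Finset.mem_sigma, Finset.mem_Iic, Finset.mem_filter, Finset.mem_univ, true_and]
      exact ⟨he_le _, (he_lt _ _).2 h21, hlt'⟩
    · intro a ha b hb hab
      simp only [Sigma.ext_iff, heq_eq_eq] at hab
      obtain ⟨h1, h2⟩ := hab
      exact Sigma.ext (Fin.castLE_injective _ h1) (heq_of_eq (Fin.castLE_injective _ h2))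
    · rintro ⟨j, m⟩ hjm
      simp only [Finset.mem_sigma, Finset.mem_Iic, Finset.mem_filter, Finset.mem_univ,
        true_and] at hjm
      obtain ⟨hj, hm, hum⟩ := hjm
      have hjlt : j.val < i.val + 1 := Nat.lt_succ_of_le (Fin.le_def.mp hj)
      have hmlt : m.val < i.val + 1 := Nat.lt_succ_of_le
        (le_trans (le_of_lt (Fin.lt_def.mp hm)) (Fin.le_def.mp hj))
      have hej : e ⟨j.val, hjlt⟩ = j := Fin.ext rfl
      have hem : e ⟨m.val, hmlt⟩ = m := Fin.ext rfl
      refine ⟨⟨⟨j.val, hjlt⟩, ⟨m.val, hmlt⟩⟩, ?_, ?_⟩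
      · refine Finset.mem_filter.mpr ⟨mem_finPairsLT.2 (Fin.lt_def.mpr (Fin.lt_def.mp hm)), ?_⟩
        exact le_of_lt ((hlt _ _).2 (by rw [hej, hem]; exact hum))
      · exact Sigma.ext hej (heq_of_eq hem)
  have hprod : (∏ a, A (e a) (u (e a))) = ∏ j ∈ Iic i, A j (u j) := by
    apply Finset.prod_bij (fun a _ => e a)
    · intro a _; exact Finset.mem_Iic.mpr (he_le a)
    · intro a _ b _ hab; exact Fin.castLE_injective _ hab
    · intro j hj
      have hjlt : j.val < i.val + 1 := Nat.lt_succ_of_le (Fin.le_def.mp (Finset.mem_Iic.mp hj))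
      exact ⟨⟨j.val, hjlt⟩, Finset.mem_univ _, Fin.ext rfl⟩
    · intro a _; rfl
  rw [hdet, hsign, hprod, Finset.prod_mul_distrib, Finset.prod_pow_eq_pow_sum]
  push_cast
  ring

theorem genPermMatrix_minors_nonneg_iff_signs_aux (k : ℕ) (A : Matrix (Fin k) (Fin k) ℝ)
    (u : Equiv.Perm (Fin k)) (hA : ∀ i j, A i j ≠ 0 ↔ j = u i)
    (hminor : ∀ i, leadingMinor A u i = ∏ j ∈ Iic i, ((-1:ℝ)^(nep u j) * A j (u j))) :
    (∀ i : Fin k, 0 ≤ leadingMinor A u i) ↔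
    (∀ i : Fin k, Real.sign (A i (u i)) = (-1 : ℝ) ^ nep u i) := by
  have hf : ∀ j : Fin k, ((-1:ℝ) ^ nep u j * A j (u j)) ≠ 0 := fun j =>
    mul_ne_zero (pow_ne_zero _ (by norm_num)) ((hA j (u j)).2 rfl)
  have hkey : ∀ j : Fin k, (0 < (-1:ℝ)^(nep u j) * A j (u j)) ↔
      Real.sign (A j (u j)) = (-1:ℝ) ^ nep u j := by
    intro j
    have hAj : A j (u j) ≠ 0 := (hA j (u j)).2 rfl
    rcases Nat.even_or_odd (nep u j) with h | h
    · rw [h.neg_one_pow, one_mul]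
      constructor
      · exact fun hpos => Real.sign_of_pos hpos
      · intro hs
        rcases hAj.lt_or_gt with hneg | hpos
        · rw [Real.sign_of_neg hneg] at hs; norm_num at hs
        · exact hpos
    · rw [h.neg_one_pow, neg_one_mul, neg_pos]
      constructor
      · exact fun hneg => Real.sign_of_neg hneg
      · intro hs
        rcases hAj.lt_or_gt with hneg | hpos
        · exact hneg
        · rw [Real.sign_of_pos hpos] at hs; norm_num at hs
  constructor
  · intro h j
    rw [← hkey]
    have H : ∀ n : ℕ, ∀ j : Fin k, j.val = n → 0 < (-1:ℝ)^(nep u j) * A j (u j) := by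
      intro n
      induction n using Nat.strong_induction_on with
      | _ n ih =>
        intro j hj
        have hpos : 0 < ∏ m ∈ Iio j, ((-1:ℝ)^(nep u m) * A m (u m)) :=
          Finset.prod_pos (fun m hm =>
            ih m.val (hj ▸ Fin.lt_def.mp (Finset.mem_Iio.mp hm)) m rfl)
        have h1 : leadingMinor A u j =
            ((-1:ℝ)^(nep u j) * A j (u j)) * ∏ m ∈ Iio j, ((-1:ℝ)^(nep u m) * A m (u m)) := by
          rw [hminor j, ← Finset.Iio_insert, Finset.prod_insert (Finset.notMem_Iio_self)]
        by_contra hle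
        have hlt : (-1:ℝ)^(nep u j) * A j (u j) < 0 :=
          lt_of_le_of_ne (not_lt.mp hle) (hf j)
        have : leadingMinor A u j < 0 := h1 ▸ mul_neg_of_neg_of_pos hlt hpos
        exact absurd (h j) (not_le.mpr this)
    exact H j.val j rfl
  · intro h i
    rw [hminor i]
    exact Finset.prod_nonneg fun j _ => le_of_lt ((hkey j).2 (h j))


/-- For a generalized permutation matrix `A` with nonzero entries exactly at `(i, u i)`,
the minors `Δ_{{u 1,...,u i}}(A)` are nonnegative for all `i` if and only if the sign of
each pivot entry `A i (u i)` equals `(-1) ^ nep(i)`. -/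
theorem genPermMatrix_minors_nonneg_iff_signs (k : ℕ) (A : Matrix (Fin k) (Fin k) ℝ)
    (u : Equiv.Perm (Fin k)) (hA : ∀ i j, A i j ≠ 0 ↔ j = u i) :
    (∀ i : Fin k, 0 ≤ leadingMinor A u i) ↔
    (∀ i : Fin k, Real.sign (A i (u i)) = (-1 : ℝ) ^ nep u i) := by
  exact genPermMatrix_minors_nonneg_iff_signs_aux k A u hA (leadingMinor_eq A u hA)
end

section
/- Let M and M' be matroids on the same ground set E such that M is a quotient of M' (every flat of M is a flat of M'; equivalently, every basis of M is contained in a basis of M' and every basis of M' contains a basis of M, for the case of matroid quotients). Then the dual matroid M'* is a quotient of M*. -/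
/-! Complementation in the ground set reverses inclusions, so it exchanges the two halves of the
quotient condition between `M, M'` and `M'✶, M✶`. -/

/-- `M` is a quotient of `M'`: every basis of `M` is contained in some basis of `M'`,
and every basis of `M'` contains some basis of `M`. -/
def MatroidQuot {α : Type*} (M M' : Matroid α) : Prop :=
  (∀ B, M.IsBase B → ∃ B', M'.IsBase B' ∧ B ⊆ B') ∧
  (∀ B', M'.IsBase B' → ∃ B, M.IsBase B ∧ B ⊆ B')

namespace Matroid

variable {α : Type*} {M M' : Matroid α}

theorem exists_dual_isBase_superset (hE : M'.E ⊆ M.E)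
    (h : ∀ B', M'.IsBase B' → ∃ B, M.IsBase B ∧ B ⊆ B') {B : Set α} (hB : M'✶.IsBase B) :
    ∃ B', M✶.IsBase B' ∧ B ⊆ B' := by
  obtain ⟨B₀, hB₀, hB₀B⟩ := h _ hB.compl_isBase_of_dual
  refine ⟨M.E \ B₀, hB₀.compl_isBase_dual, ?_⟩
  calc B = M'.E \ (M'.E \ B) := (Set.sdiff_sdiff_cancel_left hB.subset_ground).symm
    _ ⊆ M.E \ B₀ := Set.sdiff_subset_sdiff hE hB₀B

theorem exists_dual_isBase_subset (hE : M'.E ⊆ M.E)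
    (h : ∀ B, M.IsBase B → ∃ B', M'.IsBase B' ∧ B ⊆ B') {B : Set α} (hB : M✶.IsBase B) :
    ∃ B', M'✶.IsBase B' ∧ B' ⊆ B := by
  obtain ⟨B₁, hB₁, hBB₁⟩ := h _ hB.compl_isBase_of_dual
  refine ⟨M'.E \ B₁, hB₁.compl_isBase_dual, ?_⟩
  calc M'.E \ B₁ ⊆ M.E \ (M.E \ B) := Set.sdiff_subset_sdiff hE hBB₁
    _ = B := Set.sdiff_sdiff_cancel_left hB.subset_ground

end Matroid

/-- If `M` is a quotient of `M'` (on the same ground set), then the dual `M'✶`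
is a quotient of `M✶`. -/
theorem dual_quotient_of_quotient {α : Type*} (M M' : Matroid α)
    (hE : M.E = M'.E) (h : MatroidQuot M M') :
    MatroidQuot M'✶ M✶ :=
  ⟨fun _ hB ↦ Matroid.exists_dual_isBase_superset hE.ge h.2 hB,
    fun _ hB ↦ Matroid.exists_dual_isBase_subset hE.ge h.1 hB⟩
end

section
/- Let u ∈ S_n, and for each box (i,j) of the dual Rothe diagram Rothe(u) = {(i,j) : u(i) < j and u⁻¹(j) > i}, associate the simple transposition s_{i+h-1} where h is the position of the box counted from the right within the boxes of row i of Rothe(u). Let s_{i₁}, s_{i₂}, ..., s_{i_m} be the sequence of associated transpositions read row by row from bottom to top and within each row from right to left, and set x = s_{i₁} s_{i₂} ⋯ s_{i_m}. Then u · x = w₀ (the longest permutation), and this expression for x is reduced, i.e., m = ℓ(x). -/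
/-!
Write `x = R_{n-1} ⋯ R_0`, where row `i` of the diagram contributes
`R_i = s_i s_{i+1} ⋯ s_{i+r_i-1}` (0-indexed) and `r_i` counts the coinversions `(i, t)` of `u`.
Acting on positions, `R_i` moves the entry in position `i` to position `i + r_i` and shifts
the entries in between one step to the left. By downward induction on `k`, the one-line
notation of `u R_{n-1} ⋯ R_k` agrees with `u` before position `k` and is decreasing from `k` on:
multiplying by `R_k` inserts `u k` into the decreasing tail right behind the `r_k` entries
exceeding it. For `k = 0` this is `w₀`.

Reducedness is counting: each letter adds at most one inversion, so `ℓ(x) ≤ m`, while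
`ℓ(u) + m = ℓ(w₀) ≤ ℓ(u) + ℓ(x)` because inversions and coinversions of `u` partition all pairs.
-/

/-- The number of inversions (Coxeter length) of a permutation of `Fin n`. -/
def invCount {n : ℕ} (σ : Equiv.Perm (Fin n)) : ℕ :=
  (Finset.univ.filter (fun p : Fin n × Fin n => p.1 < p.2 ∧ σ p.2 < σ p.1)).card

/-- The simple transposition `s_{t+1} = (t+1, t+2)` (1-indexed), i.e. the swap of the
0-indexed elements `t` and `t+1` of `Fin n` (the identity if out of range). -/
def sPerm (n : ℕ) (t : ℕ) : Equiv.Perm (Fin n) :=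
  if h : t + 1 < n then Equiv.swap ⟨t, Nat.lt_of_succ_lt h⟩ ⟨t + 1, h⟩ else 1

/-- The number of boxes of row `i` (0-indexed) of the dual Rothe diagram
`Rothe(u) = {(i,j) : u i < j ∧ i < u⁻¹ j}`. -/
def rotheRowLen {n : ℕ} (u : Equiv.Perm (Fin n)) (i : Fin n) : ℕ :=
  (Finset.univ.filter (fun j : Fin n => u i < j ∧ i < u⁻¹ j)).card

/-- The word of simple transpositions associated to the boxes of `Rothe(u)`, read
row by row from bottom to top and within each row from right to left: the box of
row `i` (0-indexed) in position `h` from the right carries the simple transposition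
`s_{(i+1)+h-1}` (1-indexed), i.e. `sPerm n (i + (h-1))`. -/
def rotheWord {n : ℕ} (u : Equiv.Perm (Fin n)) : List (Equiv.Perm (Fin n)) :=
  (((List.finRange n).reverse).map (fun i =>
    (List.range (rotheRowLen u i)).map (fun h => sPerm n (i.val + h)))).flatten

open Finset Function

section

variable {n : ℕ}

lemma sPerm_apply_of_ne {t : ℕ} {z : Fin n} (h₁ : z.val ≠ t) (h₂ : z.val ≠ t + 1) :
    sPerm n t z = z := by
  unfold sPerm
  split
  · exact Equiv.swap_apply_of_ne_of_ne (Fin.ne_of_val_ne h₁) (Fin.ne_of_val_ne h₂)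
  · rfl

lemma sPerm_apply_left {t : ℕ} (h : t + 1 < n) : sPerm n t ⟨t, by omega⟩ = ⟨t + 1, h⟩ := by
  simp [sPerm, h]

lemma sPerm_apply_right {t : ℕ} (h : t + 1 < n) : sPerm n t ⟨t + 1, h⟩ = ⟨t, by omega⟩ := by
  simp [sPerm, h]

/-- The product of the letters of row `k` of the Rothe word, when that row has `r` boxes. -/
def sPermProd (n k r : ℕ) : Equiv.Perm (Fin n) :=
  ((List.range r).map fun h => sPerm n (k + h)).prod

lemma sPermProd_succ (k r : ℕ) : sPermProd n k (r + 1) = sPermProd n k r * sPerm n (k + r) := by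
  simp [sPermProd, List.range_succ]

lemma sPermProd_apply_of_not_mem {k r : ℕ} {z : Fin n} (h : z.val < k ∨ k + r < z.val) :
    sPermProd n k r z = z := by
  induction r with
  | zero => simp [sPermProd]
  | succ r ih =>
    rw [sPermProd_succ, Equiv.Perm.mul_apply, sPerm_apply_of_ne (by omega) (by omega)]
    exact ih (by omega)

lemma sPermProd_apply_val_of_lt {k r : ℕ} {z : Fin n} (h₁ : k ≤ z.val) (h₂ : z.val < k + r)
    (hn : k + r < n) : (sPermProd n k r z).val = z.val + 1 := by
  induction r with
  | zero => omega
  | succ r ih =>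
    rw [sPermProd_succ, Equiv.Perm.mul_apply]
    rcases Nat.lt_or_ge z.val (k + r) with h | h
    · rw [sPerm_apply_of_ne (by omega) (by omega)]
      exact ih h (by omega)
    · have hz : z = ⟨k + r, by omega⟩ := Fin.ext (by simp; omega)
      rw [hz, sPerm_apply_left (by omega), sPermProd_apply_of_not_mem (Or.inr (by simp))]

lemma sPermProd_apply_val_of_eq {k r : ℕ} {z : Fin n} (h : z.val = k + r) :
    (sPermProd n k r z).val = k := by
  induction r generalizing z with
  | zero => simpa [sPermProd] using h
  | succ r ih =>
    have hz : z = ⟨k + r + 1, by omega⟩ := Fin.ext (by simp; omega)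
    rw [hz, sPermProd_succ, Equiv.Perm.mul_apply, sPerm_apply_right (by omega)]
    exact ih rfl


section Insertion

variable {α : Type*} [LinearOrder α] {w : Fin n → α} {k : Fin n} {r : ℕ}

lemma lt_apply_iff_of_strictAntiOn (hanti : StrictAntiOn w (Set.Ioi k))
    (hcard : #{j | k < j ∧ w k < w j} = r) {j : Fin n} (hj : k < j) :
    w k < w j ↔ j.val ≤ k.val + r := by
  -- The entries of the tail exceeding `w k` form an initial segment of it: compare its size
  -- with that of `(k, j]`, resp. `(k, j)`.
  constructor
  · intro hlt
    have hsub : Ioc k.val j.val ⊆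
        ({j | k < j ∧ w k < w j} : Finset (Fin n)).map Fin.valEmbedding := by
      intro i hi
      rw [mem_Ioc] at hi
      refine mem_map.2 ⟨⟨i, by omega⟩, mem_filter.2 ⟨mem_univ _, Fin.lt_def.2 hi.1, ?_⟩, rfl⟩
      rcases hi.2.lt_or_eq with hij | hij
      · exact hlt.trans (hanti (Fin.lt_def.2 hi.1) hj (Fin.lt_def.2 hij))
      · rwa [show (⟨i, _⟩ : Fin n) = j from Fin.ext hij]
    have := card_le_card hsub
    rw [card_map, hcard, Nat.card_Ioc] at this
    omega
  · intro hle
    by_contra hnlt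
    have hsub :
        ({j | k < j ∧ w k < w j} : Finset (Fin n)).map Fin.valEmbedding ⊆ Ioo k.val j.val := by
      intro i hi
      obtain ⟨i, hiS, rfl⟩ := mem_map.1 hi
      rw [mem_filter] at hiS
      refine mem_Ioo.2 ⟨hiS.2.1, lt_of_not_ge fun hji => hnlt ?_⟩
      rcases (Fin.le_def.2 hji).lt_or_eq with hji | rfl
      · exact hiS.2.2.trans (hanti hj hiS.2.1 hji)
      · exact hiS.2.2
    have := card_le_card hsub
    rw [card_map, hcard, Nat.card_Ioo] at this
    omega

/-- Composing with `sPermProd n k r` moves the entry `w k` to position `k + r`, behind the `r`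
entries of the tail that exceed it. -/
lemma strictAntiOn_comp_sPermProd (hw : Injective w) (hanti : StrictAntiOn w (Set.Ioi k))
    (hcard : #{j | k < j ∧ w k < w j} = r) :
    StrictAntiOn (w ∘ sPermProd n k r) (Set.Ici k) := by
  have hkr : k.val + r < n := by
    have := card_le_card (s := {j | k < j ∧ w k < w j}) (t := Ioi k)
      fun j hj => mem_Ioi.2 (mem_filter.1 hj).2.1
    rw [hcard, Fin.card_Ioi] at this
    omega
  have hlt {j : Fin n} (hj : k < j) := lt_apply_iff_of_strictAntiOn hanti hcard hj
  intro a ha b hb hab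
  simp only [Set.mem_Ici, Fin.le_def] at ha hb
  rw [Fin.lt_def] at hab
  simp only [comp_apply]
  rcases lt_trichotomy a.val (k + r) with har | har | har
  · have hca := sPermProd_apply_val_of_lt ha har hkr
    rcases lt_trichotomy b.val (k + r) with hbr | hbr | hbr
    · have hcb := sPermProd_apply_val_of_lt hb hbr hkr
      exact hanti (Fin.lt_def.2 (by omega)) (Fin.lt_def.2 (by omega)) (Fin.lt_def.2 (by omega))
    · rw [Fin.ext (sPermProd_apply_val_of_eq hbr)]
      exact (hlt (Fin.lt_def.2 (by omega))).2 (by omega)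
    · rw [sPermProd_apply_of_not_mem (Or.inr hbr)]
      exact hanti (Fin.lt_def.2 (by omega)) (Fin.lt_def.2 (by omega)) (Fin.lt_def.2 (by omega))
  · rw [Fin.ext (sPermProd_apply_val_of_eq har), sPermProd_apply_of_not_mem (Or.inr (by omega))]
    have hbk : k < b := Fin.lt_def.2 (by omega)
    refine lt_of_le_of_ne (not_lt.1 fun h => ?_) (hw.ne hbk.ne')
    have := (hlt hbk).1 h
    omega
  · rw [sPermProd_apply_of_not_mem (Or.inr har), sPermProd_apply_of_not_mem (Or.inr (by omega))]
    exact hanti (Fin.lt_def.2 (by omega)) (Fin.lt_def.2 (by omega)) (Fin.lt_def.2 hab)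

end Insertion

lemma rotheRowLen_eq_card (u : Equiv.Perm (Fin n)) (i : Fin n) :
    rotheRowLen u i = #{t | i < t ∧ u i < u t} :=
  card_equiv u.symm fun j => by simp [and_comm]

def rotheRowLen' (u : Equiv.Perm (Fin n)) (k : ℕ) : ℕ :=
  if h : k < n then rotheRowLen u ⟨k, h⟩ else 0

/-- The product of the rows `n - 1, …, k` of the Rothe word, in this order. -/
def rotheTailProd (u : Equiv.Perm (Fin n)) (k : ℕ) : Equiv.Perm (Fin n) :=
  ((List.range' k (n - k)).reverse.map fun i => sPermProd n i (rotheRowLen' u i)).prod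

lemma rotheWord_prod (u : Equiv.Perm (Fin n)) : (rotheWord u).prod = rotheTailProd u 0 := by
  rw [rotheTailProd, Nat.sub_zero, ← List.range_eq_range', ← List.map_coe_finRange_eq_range]
  simp only [rotheWord, List.prod_flatten, List.map_reverse, List.map_map]
  congr 3 with i
  simp [sPermProd, rotheRowLen']

lemma rotheTailProd_self (u : Equiv.Perm (Fin n)) : rotheTailProd u n = 1 := by
  simp [rotheTailProd]

lemma rotheTailProd_of_lt (u : Equiv.Perm (Fin n)) {k : ℕ} (hk : k < n) :
    rotheTailProd u k = rotheTailProd u (k + 1) * sPermProd n k (rotheRowLen u ⟨k, hk⟩) := by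
  rw [rotheTailProd, rotheTailProd, show n - k = n - (k + 1) + 1 by omega, List.range'_succ]
  simp [rotheRowLen', hk]

lemma rotheTailProd_apply_of_lt (u : Equiv.Perm (Fin n)) {k : ℕ} (hk : k ≤ n) {z : Fin n}
    (hz : z.val < k) : rotheTailProd u k z = z := by
  induction hk using Nat.decreasingInduction with
  | self => simp [rotheTailProd_self]
  | of_succ k hk ih =>
    rw [rotheTailProd_of_lt u hk, Equiv.Perm.mul_apply, sPermProd_apply_of_not_mem (Or.inl hz)]
    exact ih (by omega)

lemma strictAntiOn_mul_rotheTailProd (u : Equiv.Perm (Fin n)) {k : ℕ} (hk : k ≤ n) :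
    StrictAntiOn (u * rotheTailProd u k) {j | k ≤ j.val} := by
  induction hk using Nat.decreasingInduction with
  | self => exact fun a ha => (a.isLt.not_ge ha).elim
  | of_succ k hk ih =>
    set p := rotheTailProd u (k + 1)
    have hfix : ∀ z : Fin n, z ≤ ⟨k, hk⟩ → p z = z :=
      fun z hz => rotheTailProd_apply_of_lt u hk (Nat.lt_succ_of_le hz)
    have hp : p ⟨k, hk⟩ = ⟨k, hk⟩ := hfix _ le_rfl
    have hp_le (j : Fin n) : p j ≤ ⟨k, hk⟩ ↔ j ≤ ⟨k, hk⟩ :=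
      ⟨fun h => p.injective (hfix _ h) ▸ h, fun h => (hfix j h).symm ▸ h⟩
    have hcard : #{j | ⟨k, hk⟩ < j ∧ (u * p) ⟨k, hk⟩ < (u * p) j} = rotheRowLen u ⟨k, hk⟩ := by
      rw [rotheRowLen_eq_card]
      refine card_equiv p fun j => ?_
      simp only [mem_filter, mem_univ, true_and, Equiv.Perm.mul_apply, hp, ← not_le, hp_le]
    rw [rotheTailProd_of_lt u hk, Equiv.Perm.coe_mul]
    exact strictAntiOn_comp_sPermProd (k := ⟨k, hk⟩) (u * p).injective ih hcard

lemma eq_revPerm_of_strictAnti {v : Equiv.Perm (Fin n)} (hv : StrictAnti v) :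
    v = Fin.revPerm :=
  Equiv.ext <| congrFun <| (hv.range_inj Fin.rev_strictAnti).1 <| by
    rw [v.range_eq_univ, Fin.rev_surjective.range_eq]

lemma mul_rotheWord_prod (u : Equiv.Perm (Fin n)) :
    u * (rotheWord u).prod = Fin.revPerm :=
  eq_revPerm_of_strictAnti fun a b hab => by
    rw [rotheWord_prod]
    exact strictAntiOn_mul_rotheTailProd u (Nat.zero_le n) (Nat.zero_le _) (Nat.zero_le _) hab

def coinvCount (σ : Equiv.Perm (Fin n)) : ℕ :=
  #{p : Fin n × Fin n | p.1 < p.2 ∧ σ p.1 < σ p.2}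

lemma invCount_one : invCount (1 : Equiv.Perm (Fin n)) = 0 :=
  card_eq_zero.2 (filter_eq_empty_iff.2 fun _ _ h => lt_asymm h.1 h.2)

/-- An inversion of `σ * τ` is either an inversion of `τ` or the `τ`-preimage of an inversion
of `σ`. -/
lemma invCount_mul_le (σ τ : Equiv.Perm (Fin n)) :
    invCount (σ * τ) ≤ invCount σ + invCount τ := by
  rw [invCount, ← card_filter_add_card_filter_not fun p : Fin n × Fin n => τ p.2 < τ p.1,
    filter_filter, filter_filter, add_comm (invCount σ)]
  refine add_le_add (card_le_card fun p hp => ?_)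
    (card_le_card_of_injOn (τ.prodCongr τ) (fun p hp => ?_) (τ.prodCongr τ).injective.injOn)
  · simp only [mem_filter, mem_univ, true_and] at hp ⊢
    exact ⟨hp.1.1, hp.2⟩
  · simp only [mem_coe, mem_filter, mem_univ, true_and, not_lt, Equiv.Perm.mul_apply,
      Equiv.prodCongr_apply, Prod.map_fst, Prod.map_snd] at hp ⊢
    exact ⟨hp.2.lt_of_ne (τ.injective.ne hp.1.1.ne), hp.1.2⟩

lemma invCount_sPerm_le (t : ℕ) : invCount (sPerm n t) ≤ 1 := by
  by_cases h : t + 1 < n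
  · calc invCount (sPerm n t) ≤ #{((⟨t, by omega⟩ : Fin n), (⟨t + 1, h⟩ : Fin n))} := by
          refine card_le_card fun p hp => ?_
          simp only [sPerm, h, dite_true, mem_filter, mem_univ, true_and, Equiv.swap_apply_def]
            at hp
          simp only [mem_singleton, Prod.ext_iff, Fin.ext_iff]
          split_ifs at hp <;> simp only [Fin.ext_iff, Fin.lt_def] at * <;> omega
      _ = 1 := card_singleton _
  · simp [sPerm, h, invCount_one]

lemma invCount_list_prod_le (l : List (Equiv.Perm (Fin n))) (hl : ∀ σ ∈ l, invCount σ ≤ 1) :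
    invCount l.prod ≤ l.length := by
  induction l with
  | nil => simp [invCount_one]
  | cons σ l ih =>
    rw [List.prod_cons, List.length_cons]
    have := invCount_mul_le σ l.prod
    have := hl σ List.mem_cons_self
    have := ih fun τ hτ => hl τ (List.mem_cons_of_mem σ hτ)
    omega

lemma invCount_add_coinvCount (σ : Equiv.Perm (Fin n)) :
    invCount σ + coinvCount σ = #{p : Fin n × Fin n | p.1 < p.2} := by
  rw [← card_filter_add_card_filter_not fun p : Fin n × Fin n => σ p.2 < σ p.1,
    filter_filter, filter_filter, invCount, coinvCount]
  congr 2 with p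
  simp only [mem_filter, mem_univ, true_and, not_lt]
  exact and_congr_right fun hp =>
    (le_iff_lt_or_eq.trans (or_iff_left (σ.injective.ne hp.ne))).symm

lemma invCount_revPerm : invCount (Fin.revPerm : Equiv.Perm (Fin n)) =
    #{p : Fin n × Fin n | p.1 < p.2} := by
  simp [invCount]

lemma length_rotheWord (u : Equiv.Perm (Fin n)) : (rotheWord u).length = coinvCount u := by
  rw [coinvCount, card_eq_sum_card_fiberwise fun p _ => mem_univ p.1]
  simp only [rotheWord, List.length_flatten, List.map_map, List.map_reverse, List.sum_reverse,
    ← Fin.sum_univ_def]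
  refine sum_congr rfl fun i _ => ?_
  rw [comp_apply, List.length_map, List.length_range, rotheRowLen_eq_card]
  refine card_nbij' (fun t => (i, t)) Prod.snd (fun t ht => ?_) (fun p hp => ?_)
    (fun _ _ => rfl) (fun p hp => ?_)
  · simpa using ht
  · obtain ⟨hp, rfl⟩ := (mem_filter.1 hp).imp_left fun h => (mem_filter.1 h).2
    simpa using hp
  · exact Prod.ext (mem_filter.1 hp).2.symm rfl

lemma invCount_le_one_of_mem_rotheWord (u : Equiv.Perm (Fin n)) {σ : Equiv.Perm (Fin n)}
    (hσ : σ ∈ rotheWord u) : invCount σ ≤ 1 := by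
  simp only [rotheWord, List.mem_flatten, List.mem_map] at hσ
  obtain ⟨_, ⟨i, -, rfl⟩, hσ⟩ := hσ
  obtain ⟨h, -, rfl⟩ := List.mem_map.1 hσ
  exact invCount_sPerm_le _

end

/-- Reading the simple transpositions associated to the boxes of the dual Rothe
diagram of `u` row by row from bottom to top and right to left and taking the
product `x`, one gets `u · x = w₀` (the longest permutation, `Fin.revPerm`), and
this expression for `x` is reduced: its length equals the number of letters,
which is the number of boxes of `Rothe(u)`. -/
theorem rothe_word_prod_eq_w0_and_reduced (n : ℕ) (u : Equiv.Perm (Fin n)) :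
    u * (rotheWord u).prod = Fin.revPerm ∧
    invCount (rotheWord u).prod = (rotheWord u).length := by
  have hw₀ := mul_rotheWord_prod u
  refine ⟨hw₀, le_antisymm
    (invCount_list_prod_le _ fun _ => invCount_le_one_of_mem_rotheWord u) ?_⟩
  have hsub := invCount_mul_le u (rotheWord u).prod
  rw [hw₀, invCount_revPerm, ← invCount_add_coinvCount u, ← length_rotheWord] at hsub
  omega
end

section
/- Let k, n be integers with 0 ≤ k ≤ n and let I ≤ J in the Gale order on k-element subsets of [n]. Then the collection B = {S ∈ binom([n],k) : I ≤ S ≤ J in Gale order} is the set of bases of a matroid on [n] (a lattice path matroid). -/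
/-- Gale order on `k`-element subsets of `[n]`: `S ≤ T` iff they have the same size and,
writing `S = {s₁ < … < s_k}` and `T = {t₁ < … < t_k}`, we have `sᵢ ≤ tᵢ` for all `i`. -/
def GaleLE {n : ℕ} (S T : Finset (Fin n)) : Prop :=
  S.card = T.card ∧
  ∀ (m : ℕ) (hS : m < (S.sort (· ≤ ·)).length) (hT : m < (T.sort (· ≤ ·)).length),
    (S.sort (· ≤ ·)).get ⟨m, hS⟩ ≤ (T.sort (· ≤ ·)).get ⟨m, hT⟩

/-!
With `countBelow S a = #{x ∈ S | x < a}`, the Gale order reads `S ≤ T ↔ #S = #T ∧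
countBelow T ≤ countBelow S` pointwise, so the interval `[I, J]` is a box of count functions.
To exchange `b ∈ B \ B'`, follow `D = countBelow B - countBelow B'` (in `ℤ`) away from `b`:
if `D b < 0`, take the last `x < b` with `D x ≥ 0`; otherwise `D (b + 1) > 0` and `x` ends the
run of positive values of `D` starting at `b + 1`. In both cases `D` steps down at `x`, so
`x ∈ B' \ B`, and the count function of `insert x (B.erase b)` lies between those of `B` and
`B'`, hence in the box.
-/

open Finset

theorem Monotone.forall_le_iff_card_filter_lt {ι α : Type*} [Fintype ι] [LinearOrder ι]
    [LinearOrder α] {f g : ι → α} (hf : Monotone f) (hg : Monotone g) :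
    (∀ i, f i ≤ g i) ↔ ∀ a, #{j | g j < a} ≤ #{j | f j < a} := by
  refine ⟨fun h a => card_le_card fun j hj => ?_, fun h i => ?_⟩
  · simp only [mem_filter, mem_univ, true_and] at hj ⊢
    exact (h j).trans_lt hj
  · by_contra! hgf
    have below_f : #{j | f j < f i} ≤ #{j | j < i} :=
      card_le_card fun j hj => by simpa using hf.reflect_lt (mem_filter.1 hj).2
    have below_g : #{j | j ≤ i} ≤ #{j | g j < f i} :=
      card_le_card fun j hj => by simpa using (hg (mem_filter.1 hj).2).trans_lt hgf
    have : #{j | j < i} < #{j | j ≤ i} :=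
      card_lt_card <|
        (ssubset_iff_of_subset fun j => by simpa using le_of_lt).2 ⟨i, by simp, by simp⟩
    have := h (f i)
    omega

section

variable {n : ℕ}

def countBelow (S : Finset (Fin n)) (a : ℕ) : ℕ := #{x ∈ S | x.val < a}

theorem countBelow_eq_card_filter_orderEmbOfFin (S : Finset (Fin n)) {k : ℕ} (h : #S = k)
    (a : ℕ) : countBelow S a = #{i | (S.orderEmbOfFin h i : ℕ) < a} := by
  conv_lhs => rw [countBelow, ← image_orderEmbOfFin_univ S h, filter_image]
  exact card_image_of_injective _ (S.orderEmbOfFin h).injective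

theorem galeLE_iff_forall_orderEmbOfFin_le {S T : Finset (Fin n)} {k : ℕ} (hS : #S = k)
    (hT : #T = k) : GaleLE S T ↔ ∀ i, S.orderEmbOfFin hS i ≤ T.orderEmbOfFin hT i := by
  refine ⟨fun h i => h.2 i (by simp [hS]) (by simp [hT]), fun h => ⟨hS.trans hT.symm, ?_⟩⟩
  intro m hmS hmT
  exact h ⟨m, by simpa [hS] using hmS⟩

theorem galeLE_iff_countBelow_le {S T : Finset (Fin n)} :
    GaleLE S T ↔ #S = #T ∧ ∀ a, countBelow T a ≤ countBelow S a := by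
  by_cases hST : #S = #T
  · simp only [hST, true_and, galeLE_iff_forall_orderEmbOfFin_le hST rfl,
      countBelow_eq_card_filter_orderEmbOfFin S hST, countBelow_eq_card_filter_orderEmbOfFin T rfl]
    exact Monotone.forall_le_iff_card_filter_lt (f := fun i => (S.orderEmbOfFin hST i : ℕ))
      (g := fun i => (T.orderEmbOfFin rfl i : ℕ)) (fun _ _ h => (S.orderEmbOfFin hST).monotone h)
      (fun _ _ h => (T.orderEmbOfFin rfl).monotone h)
  · exact iff_of_false (fun h => hST h.1) (fun h => hST h.1)

theorem countBelow_zero (S : Finset (Fin n)) : countBelow S 0 = 0 := by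
  simp [countBelow]

theorem countBelow_of_le (S : Finset (Fin n)) {a : ℕ} (ha : n ≤ a) : countBelow S a = #S := by
  rw [countBelow, filter_true_of_mem fun x _ => x.isLt.trans_le ha]

theorem countBelow_succ (S : Finset (Fin n)) (x : Fin n) :
    countBelow S (x + 1) = countBelow S x + if x ∈ S then 1 else 0 := by
  simp only [countBelow, card_filter, Nat.lt_succ_iff_lt_or_eq, ← Fin.ext_iff, ite_or]
  rw [← sum_ite_eq' S x fun _ => 1, ← sum_add_distrib]
  refine sum_congr rfl fun y _ => ?_
  split_ifs <;> simp_all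

theorem countBelow_insert_erase {S : Finset (Fin n)} {b x : Fin n} (hb : b ∈ S) (hx : x ∉ S)
    (a : ℕ) : countBelow (insert x (S.erase b)) a + (if b.val < a then 1 else 0) =
      countBelow S a + if x.val < a then 1 else 0 := by
  simp only [countBelow, card_filter]
  rw [sum_insert fun h => hx (mem_of_mem_erase h), ← add_sum_erase _ _ hb]
  ring

theorem mem_and_notMem_of_countBelow_succ {B B' : Finset (Fin n)} (x : Fin n)
    (h : countBelow B (x + 1) + countBelow B' x < countBelow B' (x + 1) + countBelow B x) :
    x ∈ B' ∧ x ∉ B := by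
  rw [countBelow_succ, countBelow_succ] at h
  split_ifs at h <;> first | omega | exact ⟨‹_›, ‹_›⟩

theorem Nat.exists_last_crossing {p : ℕ → Prop} {a b : ℕ} (hab : a ≤ b) (ha : p a) (hb : ¬p b) :
    ∃ c, a ≤ c ∧ c < b ∧ p c ∧ ∀ d, c < d → d ≤ b → ¬p d := by
  induction b, hab using Nat.le_induction with
  | base => exact absurd ha hb
  | succ b hab ih =>
    by_cases hpb : p b
    · exact ⟨b, hab, b.lt_succ_self, hpb, fun d hbd hd => by rwa [show d = b + 1 by omega]⟩
    · obtain ⟨c, hac, hcb, hpc, hafter⟩ := ih hpb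
      refine ⟨c, hac, by omega, hpc, fun d hcd hd => ?_⟩
      rcases Nat.lt_or_ge b d with hbd | hdb
      · rwa [show d = b + 1 by omega]
      · exact hafter d hcd hdb

theorem Nat.exists_first_crossing {p : ℕ → Prop} {a b : ℕ} (hab : a ≤ b) (ha : p a) (hb : ¬p b) :
    ∃ c, a ≤ c ∧ c < b ∧ (∀ d, a ≤ d → d ≤ c → p d) ∧ ¬p (c + 1) := by
  classical
  have hex : ∃ d, a ≤ d ∧ ¬p d := ⟨b, hab, hb⟩
  obtain ⟨had, hpd⟩ := Nat.find_spec hex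
  have hne : Nat.find hex ≠ a := fun h => hpd (h.symm ▸ ha)
  refine ⟨Nat.find hex - 1, by omega, by have := Nat.find_min' hex ⟨hab, hb⟩; omega, ?_, ?_⟩
  · intro d hda hdc
    by_contra hpd'
    exact Nat.find_min hex (by omega) ⟨hda, hpd'⟩
  · rwa [Nat.sub_add_cancel (by omega)]

theorem exists_swap_countBelow_mem_uIcc_of_lt {B B' : Finset (Fin n)} {b : Fin n} (hb : b ∈ B)
    (h : countBelow B b < countBelow B' b) :
    ∃ x ∈ B', x ∉ B ∧ ∀ a, countBelow (insert x (B.erase b)) a ∈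
      Set.uIcc (countBelow B a) (countBelow B' a) := by
  obtain ⟨c, -, hcb, hc, hbelow⟩ := Nat.exists_last_crossing
    (p := fun a => countBelow B' a ≤ countBelow B a) (Nat.zero_le b)
    (by simp [countBelow_zero]) (not_le.2 h)
  obtain ⟨x, rfl⟩ : ∃ x : Fin n, x.val = c := ⟨⟨c, hcb.trans b.isLt⟩, rfl⟩
  have hx := mem_and_notMem_of_countBelow_succ (B := B) (B' := B') x
    (by have := hbelow (x + 1) (by omega) hcb; simp only [not_le] at hc this; omega)
  refine ⟨x, hx.1, hx.2, fun a => ?_⟩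
  have hswap := countBelow_insert_erase hb hx.2 a
  by_cases hxab : x.val < a ∧ a ≤ b
  · have := hbelow a hxab.1 hxab.2
    simp only [not_le] at this
    exact Set.mem_uIcc.2 (.inl (by split_ifs at hswap <;> omega))
  · convert Set.left_mem_uIcc using 1
    split_ifs at hswap <;> omega

theorem exists_swap_countBelow_mem_uIcc_of_ge {B B' : Finset (Fin n)} (hcard : #B = #B')
    {b : Fin n} (hb : b ∈ B) (hb' : b ∉ B') (h : countBelow B' b ≤ countBelow B b) :
    ∃ x ∈ B', x ∉ B ∧ ∀ a, countBelow (insert x (B.erase b)) a ∈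
      Set.uIcc (countBelow B a) (countBelow B' a) := by
  have hstep : countBelow B' (b + 1) < countBelow B (b + 1) := by
    rw [countBelow_succ, countBelow_succ, if_pos hb, if_neg hb']
    omega
  have hbn : b.val + 1 ≤ n := b.isLt
  obtain ⟨c, hbc, hcn, habove, hc⟩ := Nat.exists_first_crossing
    (p := fun a => countBelow B' a < countBelow B a) hbn hstep
    (by simp [countBelow_of_le _ le_rfl, hcard])
  obtain ⟨x, rfl⟩ : ∃ x : Fin n, x.val = c := ⟨⟨c, hcn⟩, rfl⟩
  have hx := mem_and_notMem_of_countBelow_succ (B := B) (B' := B') x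
    (by have := habove x hbc le_rfl; simp only [not_lt] at hc this; omega)
  refine ⟨x, hx.1, hx.2, fun a => ?_⟩
  have hswap := countBelow_insert_erase hb hx.2 a
  by_cases hbxa : b.val < a ∧ a ≤ x
  · have := habove a hbxa.1 hbxa.2
    exact Set.mem_uIcc.2 (.inr (by split_ifs at hswap <;> omega))
  · convert Set.left_mem_uIcc using 1
    split_ifs at hswap <;> omega

theorem exists_swap_countBelow_mem_uIcc {B B' : Finset (Fin n)} (hcard : #B = #B') {b : Fin n}
    (hb : b ∈ B) (hb' : b ∉ B') :
    ∃ x ∈ B', x ∉ B ∧ ∀ a, countBelow (insert x (B.erase b)) a ∈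
      Set.uIcc (countBelow B a) (countBelow B' a) := by
  rcases lt_or_ge (countBelow B b) (countBelow B' b) with h | h
  · exact exists_swap_countBelow_mem_uIcc_of_lt hb h
  · exact exists_swap_countBelow_mem_uIcc_of_ge hcard hb hb' h

theorem card_eq_of_forall_countBelow_mem_uIcc {B B' S : Finset (Fin n)} (hcard : #B = #B')
    (h : ∀ a, countBelow S a ∈ Set.uIcc (countBelow B a) (countBelow B' a)) : #S = #B := by
  simpa [countBelow_of_le _ le_rfl, hcard] using h n

theorem GaleLE.of_forall_countBelow_mem_uIcc_left {I B B' S : Finset (Fin n)} (hB : GaleLE I B)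
    (hB' : GaleLE I B') (h : ∀ a, countBelow S a ∈ Set.uIcc (countBelow B a) (countBelow B' a)) :
    GaleLE I S := by
  rw [galeLE_iff_countBelow_le] at hB hB' ⊢
  refine ⟨hB.1.trans (card_eq_of_forall_countBelow_mem_uIcc (hB.1.symm.trans hB'.1) h).symm,
    fun a => ?_⟩
  have := hB.2 a
  have := hB'.2 a
  rcases Set.mem_uIcc.1 (h a) with h' | h' <;> omega

theorem GaleLE.of_forall_countBelow_mem_uIcc_right {J B B' S : Finset (Fin n)} (hB : GaleLE B J)
    (hB' : GaleLE B' J) (h : ∀ a, countBelow S a ∈ Set.uIcc (countBelow B a) (countBelow B' a)) :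
    GaleLE S J := by
  rw [galeLE_iff_countBelow_le] at hB hB' ⊢
  refine ⟨(card_eq_of_forall_countBelow_mem_uIcc (hB.1.trans hB'.1.symm) h).trans hB.1,
    fun a => ?_⟩
  have := hB.2 a
  have := hB'.2 a
  rcases Set.mem_uIcc.1 (h a) with h' | h' <;> omega

theorem galeLE_refl (S : Finset (Fin n)) : GaleLE S S :=
  ⟨rfl, fun _ _ _ => le_rfl⟩

end

theorem gale_interval_is_matroid_general (n k : ℕ)
    (I J : Finset (Fin n)) (hI : I.card = k) (hIJ : GaleLE I J) :
    ∃ M : Matroid (Fin n), M.E = Set.univ ∧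
      ∀ X : Set (Fin n), M.IsBase X ↔
        ∃ S : Finset (Fin n), ↑S = X ∧ S.card = k ∧ GaleLE I S ∧ GaleLE S J := by
  refine ⟨Matroid.ofExistsFiniteIsBase Set.univ _
    ⟨I, ⟨I, rfl, hI, galeLE_refl I, hIJ⟩, I.finite_toSet⟩ ?_ (fun _ _ => Set.subset_univ _),
    rfl, fun _ => Iff.rfl⟩
  rintro _ _ ⟨B, rfl, hBk, hIB, hBJ⟩ ⟨B', rfl, hB'k, hIB', hB'J⟩ b ⟨hb, hb'⟩
  obtain ⟨x, hx', hx, hbetween⟩ := exists_swap_countBelow_mem_uIcc (hBk.trans hB'k.symm) hb hb'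
  have hIS := hIB.of_forall_countBelow_mem_uIcc_left hIB' hbetween
  refine ⟨x, ⟨hx', hx⟩, insert x (B.erase b), by simp, hIS.1.symm.trans hI, hIS,
    hBJ.of_forall_countBelow_mem_uIcc_right hB'J hbetween⟩

/-- For `I ≤ J` in the Gale order on `k`-subsets of `[n]`, the Gale-order interval
`{S : I ≤ S ≤ J}` is the set of bases of a matroid on `[n]` (a lattice path matroid). -/
theorem gale_interval_is_matroid (n k : ℕ) (hk : k ≤ n)
    (I J : Finset (Fin n)) (hI : I.card = k) (hJ : J.card = k) (hIJ : GaleLE I J) :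
    ∃ M : Matroid (Fin n), M.E = Set.univ ∧
      ∀ X : Set (Fin n), M.IsBase X ↔
        ∃ S : Finset (Fin n), ↑S = X ∧ S.card = k ∧ GaleLE I S ∧ GaleLE S J :=
  gale_interval_is_matroid_general n k I J hI hIJ
end
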